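/- arXiv:1810.08667 — 7 statements merged into one kernel-verified Lean document; each statement's English description precedes it below -/
import Mathlib

section
/- Let S be a preordered semiring with 1 ≥ 0 and u ∈ S with u ≥ 1. The set of nonzero elements x ∈ S satisfying the polynomial universality condition (there exists p ∈ ℕ[X] with p(u)·x ≥ 1 and p(u) ≥ x) is closed under addition and multiplication. -/
/-- The set of nonzero elements satisfying the polynomial universality condition is
closed under addition and multiplication (for those sums/products that are nonzero). -/
theorem stmt2 {S : Type*} [CommSemiring S] [Preorder S]
    (hadd : ∀ a b c : S, a ≤ b → a + c ≤ b + c)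
    (hmul : ∀ a b c : S, a ≤ b → a * c ≤ b * c)
    (h10 : (0 : S) ≤ 1) (u : S) (hu : (1 : S) ≤ u)
    (x y : S) (hx : x ≠ 0) (hy : y ≠ 0)
    (hpx : ∃ p : Polynomial ℕ,
      1 ≤ p.eval₂ (Nat.castRingHom S) u * x ∧ x ≤ p.eval₂ (Nat.castRingHom S) u)
    (hpy : ∃ p : Polynomial ℕ,
      1 ≤ p.eval₂ (Nat.castRingHom S) u * y ∧ y ≤ p.eval₂ (Nat.castRingHom S) u) :
    (x + y ≠ 0 → ∃ p : Polynomial ℕ,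
      1 ≤ p.eval₂ (Nat.castRingHom S) u * (x + y) ∧ x + y ≤ p.eval₂ (Nat.castRingHom S) u) ∧
    (x * y ≠ 0 → ∃ p : Polynomial ℕ,
      1 ≤ p.eval₂ (Nat.castRingHom S) u * (x * y) ∧ x * y ≤ p.eval₂ (Nat.castRingHom S) u) := by
  have hmul2 : ∀ {a b c d : S}, a ≤ b → c ≤ d → a * c ≤ b * d := by
    intro a b c d h1 h2
    calc a * c ≤ b * c := hmul a b c h1
      _ = c * b := by ring
      _ ≤ d * b := hmul c d b h2
      _ = b * d := by ring
  have hadd2 : ∀ {a b c d : S}, a ≤ b → c ≤ d → a + c ≤ b + d := by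
    intro a b c d h1 h2
    calc a + c ≤ b + c := hadd a b c h1
      _ = c + b := by ring
      _ ≤ d + b := hadd c d b h2
      _ = b + d := by ring
  have hpow : ∀ n : ℕ, (0 : S) ≤ u ^ n := by
    intro n
    induction n with
    | zero => simpa using h10
    | succ n ih =>
      calc (0 : S) = 0 * u := by ring
        _ ≤ u ^ n * u := hmul 0 (u ^ n) u ih
        _ = u ^ (n + 1) := by rw [pow_succ]
  have hcast : ∀ n : ℕ, (0 : S) ≤ (n : S) := by
    intro n
    induction n with
    | zero => simp
    | succ n ih =>
      push_cast
      calc (0 : S) = 0 + 0 := by ring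
        _ ≤ (n : S) + 1 := hadd2 ih h10
  have hnn : ∀ r : Polynomial ℕ, (0 : S) ≤ r.eval₂ (Nat.castRingHom S) u := by
    intro r
    rw [Polynomial.eval₂_eq_sum, Polynomial.sum]
    refine Finset.sum_induction _ (fun s => (0 : S) ≤ s) (fun a b ha hb => ?_) le_rfl ?_
    · calc (0 : S) = 0 + 0 := by ring
        _ ≤ a + b := hadd2 ha hb
    · intro i _
      calc (0 : S) = 0 * 0 := by ring
        _ ≤ (Nat.castRingHom S (r.coeff i)) * u ^ i := hmul2 (hcast _) (hpow i)
  obtain ⟨p, hp1, hp2⟩ := hpx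
  obtain ⟨q, hq1, hq2⟩ := hpy
  set P := p.eval₂ (Nat.castRingHom S) u with hPdef
  set Q := q.eval₂ (Nat.castRingHom S) u with hQdef
  have hP0 : (0 : S) ≤ P := hnn p
  have hQ0 : (0 : S) ≤ Q := hnn q
  have hPQ0 : (0 : S) ≤ P * Q := by
    calc (0 : S) = 0 * 0 := by ring
      _ ≤ P * Q := hmul2 hP0 hQ0
  have hP2 : (1 : S) ≤ P * P := by
    calc (1 : S) ≤ P * x := hp1
      _ ≤ P * P := hmul2 le_rfl hp2
  have hQ2 : (1 : S) ≤ Q * Q := by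
    calc (1 : S) ≤ Q * y := hq1
      _ ≤ Q * Q := hmul2 le_rfl hq2
  have hQQ0 : (0 : S) ≤ Q * Q := le_trans h10 hQ2
  have hPQ2 : (1 : S) ≤ (P * Q) * (P * Q) := by
    calc (1 : S) = 1 * 1 := by ring
      _ ≤ (P * P) * (Q * Q) := hmul2 hP2 hQ2
      _ = (P * Q) * (P * Q) := by ring
  -- key lower bound for the sum
  have hAxy : (1 : S) ≤ (P * Q * (P + Q)) * (x + y) := by
    calc (1 : S) = 0 + 0 + 1 + 0 := by ring
      _ ≤ P * Q + Q * Q + P * P + P * Q :=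
        hadd2 (hadd2 (hadd2 hPQ0 hQQ0) hP2) hPQ0
      _ = (P * Q) * 1 + (Q * Q) * 1 + (P * P) * 1 + (P * Q) * 1 := by ring
      _ ≤ (P * Q) * (P * x) + (Q * Q) * (P * x) + (P * P) * (Q * y) + (P * Q) * (Q * y) :=
        hadd2 (hadd2 (hadd2 (hmul2 le_rfl hp1) (hmul2 le_rfl hp1)) (hmul2 le_rfl hq1))
          (hmul2 le_rfl hq1)
      _ = (P * Q * (P + Q)) * (x + y) := by ring
  constructor
  · intro _
    refine ⟨p * q * (p + q) * (1 + p * q), ?_, ?_⟩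
    · have hR : (p * q * (p + q) * (1 + p * q)).eval₂ (Nat.castRingHom S) u
          = P * Q * (P + Q) * (1 + P * Q) := by
        simp [Polynomial.eval₂_mul, Polynomial.eval₂_add, Polynomial.eval₂_one, hPdef, hQdef]
      rw [hR]
      calc (1 : S) = 1 + 0 := by ring
        _ ≤ (P * Q * (P + Q)) * (x + y) + (P * Q) * ((P * Q * (P + Q)) * (x + y)) :=
          hadd2 hAxy (by
            calc (0 : S) = 0 * 0 := by ring
              _ ≤ (P * Q) * ((P * Q * (P + Q)) * (x + y)) :=
                hmul2 hPQ0 (le_trans h10 hAxy))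
        _ = P * Q * (P + Q) * (1 + P * Q) * (x + y) := by ring
    · have hR : (p * q * (p + q) * (1 + p * q)).eval₂ (Nat.castRingHom S) u
          = P * Q * (P + Q) * (1 + P * Q) := by
        simp [Polynomial.eval₂_mul, Polynomial.eval₂_add, Polynomial.eval₂_one, hPdef, hQdef]
      rw [hR]
      have hPQsum0 : (0 : S) ≤ P + Q := by
        calc (0 : S) = 0 + 0 := by ring
          _ ≤ P + Q := hadd2 hP0 hQ0
      calc x + y ≤ P + Q := hadd2 hp2 hq2
        _ = 1 * (P + Q) := by ring
        _ ≤ ((P * Q) * (P * Q)) * (P + Q) := hmul2 hPQ2 le_rfl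
        _ = 0 + ((P * Q) * (P * Q)) * (P + Q) := by ring
        _ ≤ (P * Q) * (P + Q) + ((P * Q) * (P * Q)) * (P + Q) :=
          hadd2 (by
            calc (0 : S) = 0 * 0 := by ring
              _ ≤ (P * Q) * (P + Q) := hmul2 hPQ0 hPQsum0) le_rfl
        _ = P * Q * (P + Q) * (1 + P * Q) := by ring
  · intro _
    refine ⟨p * q, ?_, ?_⟩
    · have hR : (p * q).eval₂ (Nat.castRingHom S) u = P * Q := by
        simp [Polynomial.eval₂_mul, hPdef, hQdef]
      rw [hR]
      calc (1 : S) = 1 * 1 := by ring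
        _ ≤ (P * x) * (Q * y) := hmul2 hp1 hq1
        _ = P * Q * (x * y) := by ring
    · have hR : (p * q).eval₂ (Nat.castRingHom S) u = P * Q := by
        simp [Polynomial.eval₂_mul, hPdef, hQdef]
      rw [hR]
      exact hmul2 hp2 hq2
end

section
/- Let F be a semifield (every nonzero element invertible) containing a copy of ℚ≥0, x ∈ F nonzero, and n ≥ 1. Define z := Σ_{j=-n}^{n} (1 - |j|/n)·x^j ∈ F. Then (x + x^{-1})·z equals 2·z + (1/n)(x^n + x^{-n}) - 2/n, in the sense that (x + x^{-1})·z + 2/n = 2·z + (1/n)(x^n + x^{-n}). -/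
/-!
Clearing the denominator `n`, the claim becomes an identity with natural coefficients for
`S n = ∑_{|j| ≤ n} (n - |j|) x^j`. Since `S (n + 1) = S n + D n` with `D n = ∑_{|j| ≤ n} x^j`, and
`(x + x⁻¹) D n + (x^n + x^{-n}) = 2 D n + (x^{n+1} + x^{-(n+1)})`, both identities follow by
induction on `n`. Each inductive step only adds equal terms to both sides, which matters because
addition in a semifield need not be cancellative.
-/

open Finset

theorem Finset.sum_Icc_neg_natCast_succ {M : Type*} [AddCommMonoid M] (f : ℤ → M) (n : ℕ) :
    ∑ j ∈ Icc (-((n + 1 : ℕ) : ℤ)) (n + 1 : ℕ), f j =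
      ∑ j ∈ Icc (-(n : ℤ)) n, f j + (f (-(n + 1)) + f (n + 1)) := by
  rw [Nat.cast_succ, Icc_succ_succ, sum_union (by simp), sum_pair (by omega)]

noncomputable section

variable {F : Type*} [Semifield F]

def dirichletKernel (x : F) (n : ℕ) : F :=
  ∑ j ∈ Icc (-(n : ℤ)) n, x ^ j

def scaledFejerKernel (x : F) (n : ℕ) : F :=
  ∑ j ∈ Icc (-(n : ℤ)) n, ((n - j.natAbs : ℕ) : F) * x ^ j

theorem zpow_neg_natCast_add_zpow_natCast (x : F) (n : ℕ) :
    x ^ (-(n : ℤ)) + x ^ (n : ℤ) = x⁻¹ ^ n + x ^ n := by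
  rw [zpow_neg, zpow_natCast, inv_pow]

theorem dirichletKernel_succ (x : F) (n : ℕ) :
    dirichletKernel x (n + 1) = dirichletKernel x n + (x⁻¹ ^ (n + 1) + x ^ (n + 1)) := by
  rw [dirichletKernel, sum_Icc_neg_natCast_succ, ← Nat.cast_succ,
    zpow_neg_natCast_add_zpow_natCast, dirichletKernel]

theorem scaledFejerKernel_succ (x : F) (n : ℕ) :
    scaledFejerKernel x (n + 1) = scaledFejerKernel x n + dirichletKernel x n := by
  rw [scaledFejerKernel, sum_Icc_neg_natCast_succ, scaledFejerKernel, dirichletKernel,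
    ← sum_add_distrib]
  have hedge : ∀ j : ℤ, j.natAbs = n + 1 → ((n + 1 - j.natAbs : ℕ) : F) = 0 := by
    intro j hj; simp [hj]
  rw [hedge _ (by omega), hedge _ (by omega)]
  simp only [zero_mul, add_zero]
  refine sum_congr rfl fun j hmem => ?_
  have hj : j.natAbs ≤ n := by rw [mem_Icc] at hmem; omega
  rw [Nat.sub_add_comm hj, Nat.cast_succ, add_one_mul]

theorem add_inv_mul_dirichletKernel_add (x : F) (hx : x ≠ 0) (n : ℕ) :
    (x + x⁻¹) * dirichletKernel x n + (x⁻¹ ^ n + x ^ n) =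
      2 * dirichletKernel x n + (x⁻¹ ^ (n + 1) + x ^ (n + 1)) := by
  induction n with
  | zero =>
    simp only [dirichletKernel, CharP.cast_eq_zero, neg_zero, Icc_self, sum_singleton, zpow_zero,
      pow_zero, zero_add, pow_one]
    ring
  | succ n ih =>
    rw [dirichletKernel_succ]
    calc (x + x⁻¹) * (dirichletKernel x n + (x⁻¹ ^ (n + 1) + x ^ (n + 1))) +
          (x⁻¹ ^ (n + 1) + x ^ (n + 1))
        = (x + x⁻¹) * dirichletKernel x n + x * x⁻¹ * (x⁻¹ ^ n + x ^ n) +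
            (x⁻¹ ^ (n + 1) + x ^ (n + 1)) + (x⁻¹ ^ (n + 2) + x ^ (n + 2)) := by ring
      _ = ((x + x⁻¹) * dirichletKernel x n + (x⁻¹ ^ n + x ^ n)) +
            (x⁻¹ ^ (n + 1) + x ^ (n + 1)) + (x⁻¹ ^ (n + 2) + x ^ (n + 2)) := by
          rw [mul_inv_cancel₀ hx, one_mul]
      _ = _ := by rw [ih]; ring

theorem add_inv_mul_scaledFejerKernel_add_two (x : F) (hx : x ≠ 0) (n : ℕ) :
    (x + x⁻¹) * scaledFejerKernel x n + 2 = 2 * scaledFejerKernel x n + (x⁻¹ ^ n + x ^ n) := by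
  induction n with
  | zero => simp [scaledFejerKernel, one_add_one_eq_two]
  | succ n ih =>
    rw [scaledFejerKernel_succ]
    calc (x + x⁻¹) * (scaledFejerKernel x n + dirichletKernel x n) + 2
        = ((x + x⁻¹) * scaledFejerKernel x n + 2) + (x + x⁻¹) * dirichletKernel x n := by ring
      _ = 2 * scaledFejerKernel x n +
            ((x + x⁻¹) * dirichletKernel x n + (x⁻¹ ^ n + x ^ n)) := by rw [ih]; ring
      _ = _ := by rw [add_inv_mul_dirichletKernel_add x hx]; ring

end

theorem NNRat.cast_one_sub_natCast_div {F : Type*} [DivisionSemiring F] [CharZero F]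
    (k : ℕ) {n : ℕ} (hn : n ≠ 0) :
    ((1 - (k : ℚ≥0) / n : ℚ≥0) : F) = ((n - k : ℕ) : F) / n := by
  have hn' : (n : ℚ≥0) ≠ 0 := Nat.cast_ne_zero.mpr hn
  rw [← div_self hn', ← tsub_div, ← Nat.cast_tsub, NNRat.cast_div, NNRat.cast_natCast,
    NNRat.cast_natCast]

/-- The embezzlement identity: for nonzero `x` in a semifield of characteristic zero and
`z := Σ_{j=-n}^{n} (1 - |j|/n)·x^j`, one has
`(x + x⁻¹)·z + 2/n = 2·z + (1/n)(x^n + x^{-n})`. -/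
theorem stmt6 {F : Type*} [Semifield F] [CharZero F]
    (x : F) (hx : x ≠ 0) (n : ℕ) (hn : 1 ≤ n) :
    (x + x⁻¹) * (∑ j ∈ Finset.Icc (-(n : ℤ)) (n : ℤ),
        ((1 - (j.natAbs : ℚ≥0) / (n : ℚ≥0) : ℚ≥0) : F) * x ^ j) +
      ((2 / (n : ℚ≥0) : ℚ≥0) : F) =
    2 * (∑ j ∈ Finset.Icc (-(n : ℤ)) (n : ℤ),
        ((1 - (j.natAbs : ℚ≥0) / (n : ℚ≥0) : ℚ≥0) : F) * x ^ j) +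
      ((1 / (n : ℚ≥0) : ℚ≥0) : F) * (x ^ (n : ℤ) + x ^ (-(n : ℤ))) := by
  have hz : ∑ j ∈ Icc (-(n : ℤ)) n, ((1 - (j.natAbs : ℚ≥0) / (n : ℚ≥0) : ℚ≥0) : F) * x ^ j =
      (n : F)⁻¹ * scaledFejerKernel x n := by
    rw [scaledFejerKernel, mul_sum]
    refine sum_congr rfl fun j _ => ?_
    rw [NNRat.cast_one_sub_natCast_div _ (by omega), div_eq_inv_mul, mul_assoc]
  have key := congrArg ((n : F)⁻¹ * ·) (add_inv_mul_scaledFejerKernel_add_two x hx n)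
  simp only [mul_add] at key
  rw [hz, NNRat.cast_div, NNRat.cast_div, NNRat.cast_natCast, NNRat.cast_ofNat, NNRat.cast_one,
    add_comm (x ^ (n : ℤ)), zpow_neg_natCast_add_zpow_natCast]
  calc _ = (n : F)⁻¹ * ((x + x⁻¹) * scaledFejerKernel x n) + (n : F)⁻¹ * 2 := by ring
    _ = _ := by rw [key]; ring
end

section
/- Let F be a preordered semifield of characteristic zero with 1 ≥ 0, and let x ∈ F be nonzero with x ≥ 0 and x^{-1} ≥ 0. Then for every rational ε > 0 there holds x + x^{-1} + ε ≥ 2, i.e. x + x^{-1} ≥ 2 holds in the closure of the order. -/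
/-!
Compatibility of the order with multiplication by arbitrary elements, together with `0 ≤ 1`,
makes every element nonnegative, so an equation `A = B + C` already gives `B ≤ A`. For `y = x⁻¹`
the (scaled) Fejér kernel `z = (∑_{i<n} xⁱ)(∑_{j<n} yʲ)` satisfies `z ≥ n` (keep the diagonal
terms `xⁱyⁱ = 1`) and `(x + y) z + 2 = 2 z + xⁿ + yⁿ ≥ 2 z`. Dividing by `z` gives
`x + x⁻¹ + 2 / n ≥ 2`, and `2 / n ≤ ε` for `n` large.
-/

open Finset MvPolynomial

/-- Subtraction-free form of `(x - 1)(y - 1) ∑ xⁱ ∑ yʲ = (xⁿ - 1)(yⁿ - 1)`. It holds in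
`ℕ[X, Y]`, as seen inside `ℤ[X, Y]`, hence in every commutative semiring. -/
theorem add_mul_geom_sum_mul_geom_sum {R : Type*} [CommSemiring R] (x y : R) (n : ℕ) :
    (x + y) * (∑ i ∈ range n, x ^ i) * (∑ i ∈ range n, y ^ i) + (x * y) ^ n + 1
      = (x * y + 1) * (∑ i ∈ range n, x ^ i) * (∑ i ∈ range n, y ^ i) + x ^ n + y ^ n := by
  have key : ((X 0 + X 1 : MvPolynomial (Fin 2) ℕ)) * (∑ i ∈ range n, X 0 ^ i)
        * (∑ i ∈ range n, X 1 ^ i) + (X 0 * X 1) ^ n + 1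
      = (X 0 * X 1 + 1) * (∑ i ∈ range n, X 0 ^ i) * (∑ i ∈ range n, X 1 ^ i)
        + X 0 ^ n + X 1 ^ n := by
    apply map_injective (Nat.castRingHom ℤ) Nat.cast_injective
    simp only [map_add, map_mul, map_pow, map_sum, map_X, map_one]
    linear_combination
      -((X 1 - 1) * ∑ i ∈ range n, X 1 ^ i) * geom_sum_mul (X 0 : MvPolynomial (Fin 2) ℤ) n
      - (X 0 ^ n - 1) * geom_sum_mul (X 1 : MvPolynomial (Fin 2) ℤ) n
  simpa using congrArg (aeval ![x, y]) key

theorem zero_le_of_zero_le_one {α : Type*} [MulZeroOneClass α] [Preorder α] [MulLeftMono α]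
    (h10 : (0 : α) ≤ 1) (a : α) : 0 ≤ a := by
  simpa using mul_le_mul_right h10 a

theorem natCast_le_geom_sum_mul_geom_sum {R : Type*} [CommSemiring R] [Preorder R]
    [AddLeftMono R] [MulLeftMono R] (h10 : (0 : R) ≤ 1) {x y : R} (hxy : x * y = 1) (n : ℕ) :
    (n : R) ≤ (∑ i ∈ range n, x ^ i) * (∑ j ∈ range n, y ^ j) := by
  rw [sum_mul_sum]
  calc (n : R) = ∑ i ∈ range n, x ^ i * y ^ i := by simp [← mul_pow, hxy]
    _ ≤ _ := sum_le_sum fun i hi => single_le_sum (f := fun j => x ^ i * y ^ j)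
      (fun j _ => zero_le_of_zero_le_one h10 _) hi

section Semifield

variable {F : Type*} [Semifield F] [Preorder F] [AddLeftMono F] [MulLeftMono F]

theorem le_add_div_of_mul_le_mul_add (h10 : (0 : F) ≤ 1) {a b c z m : F} (hm : m ≠ 0)
    (hmz : m ≤ z) (h : a * z ≤ b * z + c) : a ≤ b + c / m := by
  have hnonneg := zero_le_of_zero_le_one h10
  by_cases hz : z = 0
  · calc a = (a / m) * m := by field_simp
      _ ≤ (a / m) * 0 := mul_le_mul_right (hz ▸ hmz) _
      _ = 0 := mul_zero _
      _ ≤ b + c / m := hnonneg _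
  have hinv : z⁻¹ ≤ m⁻¹ := by
    simpa [hm, hz, mul_comm] using mul_le_mul_right hmz (m⁻¹ * z⁻¹)
  calc a = a * z * z⁻¹ := by field_simp
    _ ≤ (b * z + c) * z⁻¹ := mul_le_mul_left h _
    _ = b + c * z⁻¹ := by field_simp
    _ ≤ b + c * m⁻¹ := add_le_add_right (mul_le_mul_right hinv c) b
    _ = b + c / m := by rw [div_eq_mul_inv]

theorem two_le_add_inv_add_two_div_natCast [CharZero F] (h10 : (0 : F) ≤ 1) {x : F}
    (hx : x ≠ 0) {n : ℕ} (hn : n ≠ 0) : 2 ≤ x + x⁻¹ + 2 / n := by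
  have hxy : x * x⁻¹ = 1 := mul_inv_cancel₀ hx
  set z := (∑ i ∈ range n, x ^ i) * (∑ j ∈ range n, x⁻¹ ^ j)
  have fejer : (x + x⁻¹) * z + 2 = 2 * z + (x ^ n + x⁻¹ ^ n) := by
    have := add_mul_geom_sum_mul_geom_sum x x⁻¹ n
    rw [hxy, one_pow] at this
    convert this using 1 <;> ring
  refine le_add_div_of_mul_le_mul_add h10 (Nat.cast_ne_zero.2 hn)
    (natCast_le_geom_sum_mul_geom_sum h10 hxy n) ?_
  rw [fejer]
  exact le_add_of_nonneg_right (zero_le_of_zero_le_one h10 _)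

theorem nnratCast_mono [CharZero F] (h10 : (0 : F) ≤ 1) : Monotone (NNRat.cast : ℚ≥0 → F) := by
  intro q r hqr
  rw [← add_tsub_cancel_of_le hqr, NNRat.cast_add]
  exact le_add_of_nonneg_right (zero_le_of_zero_le_one h10 _)

end Semifield

theorem stmt7_general {F : Type*} [Semifield F] [CharZero F] [Preorder F]
    (hadd : ∀ a b c : F, a ≤ b → a + c ≤ b + c)
    (hmul : ∀ a b c : F, a ≤ b → a * c ≤ b * c)
    (h10 : (0 : F) ≤ 1) (x : F) (hx : x ≠ 0) :
    ∀ ε : ℚ≥0, 0 < ε → (2 : F) ≤ x + x⁻¹ + (ε : F) := by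
  have : AddLeftMono F := ⟨fun c a b h => by simpa only [add_comm c] using hadd a b c h⟩
  have : MulLeftMono F := ⟨fun c a b h => by simpa only [mul_comm c] using hmul a b c h⟩
  intro ε hε
  obtain ⟨n, hn⟩ := exists_nat_gt (2 / ε)
  have hn0 : 0 < (n : ℚ≥0) := lt_of_le_of_lt (by positivity) hn
  have h2n : 2 / (n : ℚ≥0) ≤ ε := (div_le_iff₀ hn0).2 <| by
    simpa [mul_comm] using ((div_lt_iff₀ hε).1 hn).le
  calc (2 : F) ≤ x + x⁻¹ + 2 / n :=
        two_le_add_inv_add_two_div_natCast h10 hx (by exact_mod_cast hn0.ne')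
    _ = x + x⁻¹ + ((2 / n : ℚ≥0) : F) := by push_cast; rfl
    _ ≤ x + x⁻¹ + ε := add_le_add_right (nnratCast_mono h10 h2n) _

/-- In a preordered semifield of characteristic zero with `1 ≥ 0`, for nonzero `x` with
`x ≥ 0` and `x⁻¹ ≥ 0`, one has `x + x⁻¹ + ε ≥ 2` for every rational `ε > 0`. -/
theorem stmt7 {F : Type*} [Semifield F] [CharZero F] [Preorder F]
    (hadd : ∀ a b c : F, a ≤ b → a + c ≤ b + c)
    (hmul : ∀ a b c : F, a ≤ b → a * c ≤ b * c)
    (h10 : (0 : F) ≤ 1) (x : F) (hx : x ≠ 0) (hx0 : (0 : F) ≤ x) (hxi0 : (0 : F) ≤ x⁻¹) :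
    ∀ ε : ℚ≥0, 0 < ε → (2 : F) ≤ x + x⁻¹ + (ε : F) :=
  stmt7_general hadd hmul h10 x hx
end

section
/- Let f, f₁, f₂ : A → ℝ be maps from a commutative ring A with f = r·f₁ + (1-r)·f₂ for some 0 < r < 1, f(1) = f₁(1) = f₂(1) = 1, f multiplicative in the sense f(x²) = f(x)², and f₁(x²) ≥ f₁(x)², f₂(x²) ≥ f₂(x)² for all x. Then f₁(x) = f₂(x) = f(x) for all x. -/
/-- Extremality argument: if `f = r·f₁ + (1-r)·f₂` with `0 < r < 1`, all normalized at `1`,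
`f` multiplicative on squares and `f₁, f₂` super-multiplicative on squares, then
`f₁ = f₂ = f`. -/
theorem stmt9 {A : Type*} [CommRing A] (f f₁ f₂ : A → ℝ) (r : ℝ)
    (hr0 : 0 < r) (hr1 : r < 1)
    (hsum : ∀ a : A, f a = r * f₁ a + (1 - r) * f₂ a)
    (hf1 : f 1 = 1) (hf₁1 : f₁ 1 = 1) (hf₂1 : f₂ 1 = 1)
    (hfsq : ∀ a : A, f (a ^ 2) = f a ^ 2)
    (hf₁sq : ∀ a : A, f₁ a ^ 2 ≤ f₁ (a ^ 2))
    (hf₂sq : ∀ a : A, f₂ a ^ 2 ≤ f₂ (a ^ 2)) :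
    ∀ a : A, f₁ a = f a ∧ f₂ a = f a := by
  intro a
  have h1 := hsum a
  have h2 := hsum (a ^ 2)
  have h3 := hfsq a
  have h4 := hf₁sq a
  have h5 := hf₂sq a
  have hr1' : (0:ℝ) < 1 - r := by linarith
  have key : r * f₁ a ^ 2 + (1 - r) * f₂ a ^ 2 ≤ (r * f₁ a + (1 - r) * f₂ a) ^ 2 := by
    calc r * f₁ a ^ 2 + (1 - r) * f₂ a ^ 2
        ≤ r * f₁ (a ^ 2) + (1 - r) * f₂ (a ^ 2) := by
          gcongr
      _ = f (a ^ 2) := h2.symm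
      _ = f a ^ 2 := h3
      _ = (r * f₁ a + (1 - r) * f₂ a) ^ 2 := by rw [h1]
  have hle : r * (1 - r) * (f₁ a - f₂ a) ^ 2 ≤ 0 := by nlinarith [key]
  have heq : f₁ a = f₂ a := by
    have := sq_nonneg (f₁ a - f₂ a)
    have hsq : (f₁ a - f₂ a) ^ 2 = 0 := by
      nlinarith [mul_pos hr0 hr1']
    have : f₁ a - f₂ a = 0 := by
      exact pow_eq_zero_iff (n := 2) (by norm_num) |>.mp hsq
    linarith
  constructor <;> nlinarith
end

section
/- Every monotone semiring homomorphism f : ℝ≥0[X₁,…,X_d] → ℝ≥0 (with the coefficientwise order on polynomials) is the evaluation map at some point s ∈ ℝ≥0^d. -/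
open MvPolynomial NNReal

lemma nnreal_exists_nnrat_btwn {a b : ℝ≥0} (h : a < b) : ∃ q : ℚ≥0, a < q ∧ (q : ℝ≥0) < b := by
  obtain ⟨q, hq1, hq2⟩ := exists_rat_btwn (show (a : ℝ) < b from h)
  have hq0 : (0 : ℚ) ≤ q := by
    have := (a.coe_nonneg).trans hq1.le
    exact_mod_cast this
  have key : ((q.toNNRat : ℝ≥0) : ℝ) = (q : ℝ) := by
    have h1 : (NNReal.toRealHom (q.toNNRat : ℝ≥0) : ℝ) = ((q.toNNRat : ℚ≥0) : ℝ) :=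
      map_nnratCast NNReal.toRealHom q.toNNRat
    rw [show ((q.toNNRat : ℝ≥0) : ℝ) = NNReal.toRealHom (q.toNNRat : ℝ≥0) from rfl, h1,
      ← Rat.cast_nnratCast, Rat.coe_toNNRat _ hq0]
  refine ⟨q.toNNRat, ?_, ?_⟩
  · rw [← NNReal.coe_lt_coe, key]; exact hq1
  · rw [← NNReal.coe_lt_coe, key]; exact hq2

lemma nnreal_ringHom_id (g : ℝ≥0 →+* ℝ≥0) (x : ℝ≥0) : g x = x := by
  have hmono : ∀ a b : ℝ≥0, a ≤ b → g a ≤ g b := by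
    intro a b hab
    obtain ⟨c, rfl⟩ := exists_add_of_le hab
    rw [map_add]; exact le_self_add
  have hq : ∀ q : ℚ≥0, g q = q := fun q => map_nnratCast g q
  by_contra hne
  rcases lt_or_gt_of_ne hne with h | h
  · obtain ⟨q, h1, h2⟩ := nnreal_exists_nnrat_btwn h
    have := hmono _ _ h2.le
    rw [hq] at this
    exact absurd h1 (not_lt.2 this)
  · obtain ⟨q, h1, h2⟩ := nnreal_exists_nnrat_btwn h
    have := hmono _ _ h1.le
    rw [hq] at this
    exact absurd h2 (not_lt.2 this)

open MvPolynomial NNReal in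
/-- Every monotone semiring homomorphism `ℝ≥0[X₁,…,X_d] → ℝ≥0`, with the coefficientwise
order, is an evaluation map at some point `s ∈ ℝ≥0^d`. -/
theorem stmt10 {d : ℕ} (f : MvPolynomial (Fin d) ℝ≥0 →+* ℝ≥0)
    (hmono : ∀ p q : MvPolynomial (Fin d) ℝ≥0,
      (∀ m, p.coeff m ≤ q.coeff m) → f p ≤ f q) :
    ∃ s : Fin d → ℝ≥0, ∀ p : MvPolynomial (Fin d) ℝ≥0, f p = MvPolynomial.eval s p := by
  refine ⟨fun i => f (X i), fun p => ?_⟩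
  have key : f = (eval fun i => f (X i)) := by
    apply MvPolynomial.ringHom_ext
    · intro a; rw [eval_C]; exact nnreal_ringHom_id (f.comp C) a
    · intro i; simp
  rw [key]; simp
end

section
/- Let R be a commutative ring and P ⊆ R a subsemiring (closed under addition and multiplication, containing 0 and 1). Define S to be {0} together with all x ∈ P for which there exists n ≥ 1 with n·x - 1 ∈ P. Then S is a subsemiring of R: it is closed under addition and multiplication. -/
/-- Given a subsemiring `P` of a commutative ring `R`, the set `S` of `0` together with
all `x ∈ P` with `n·x - 1 ∈ P` for some `n ≥ 1` is closed under addition and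
multiplication. -/
theorem stmt12 {R : Type*} [CommRing R] (P : Subsemiring R)
    (S : Set R)
    (hS : S = {x : R | x = 0 ∨ (x ∈ P ∧ ∃ n : ℕ, 1 ≤ n ∧ (n : R) * x - 1 ∈ P)}) :
    (∀ x ∈ S, ∀ y ∈ S, x + y ∈ S) ∧ (∀ x ∈ S, ∀ y ∈ S, x * y ∈ S) := by
  subst hS
  constructor
  · rintro x (rfl | ⟨hxP, n, hn, hnx⟩) y hy
    · simpa using hy
    rcases hy with rfl | ⟨hyP, m, hm, hmy⟩
    · exact Or.inr ⟨by simpa using hxP, n, hn, by simpa using hnx⟩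
    refine Or.inr ⟨P.add_mem hxP hyP, n * m, Nat.one_le_iff_ne_zero.mpr (by positivity), ?_⟩
    have key : ((n * m : ℕ) : R) * (x + y) - 1 =
        (m : R) * ((n : R) * x - 1) + (n : R) * ((m : R) * y - 1) + ((m + n - 1 : ℕ) : R) := by
      have : (m + n - 1 : ℕ) = m + n - 1 := rfl
      push_cast [Nat.cast_sub (le_trans hm (Nat.le_add_right m n))]
      ring
    rw [key]
    exact P.add_mem (P.add_mem (P.mul_mem ((natCast_mem P m)) hnx)
      (P.mul_mem ((natCast_mem P n)) hmy)) (natCast_mem P _)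
  · rintro x (rfl | ⟨hxP, n, hn, hnx⟩) y hy
    · simp
    rcases hy with rfl | ⟨hyP, m, hm, hmy⟩
    · simp
    refine Or.inr ⟨P.mul_mem hxP hyP, n * m, Nat.one_le_iff_ne_zero.mpr (by positivity), ?_⟩
    have key : ((n * m : ℕ) : R) * (x * y) - 1 =
        ((n : R) * x - 1) * ((m : R) * y - 1) + ((n : R) * x - 1) + ((m : R) * y - 1) := by
      push_cast; ring
    rw [key]
    exact P.add_mem (P.add_mem (P.mul_mem hnx hmy) hnx) hmy
end

section
/- Let S be a preordered semiring with 1 ≥ 0 and power universal element u, and suppose p(u)·z·x ≥ m·z·y for some p ∈ ℕ[X], m ≥ 1, nonzero z, x, y ∈ S. Then for every n ≥ 1 there exists k ∈ ℕ such that u^{2k}·p(u)^n·x^n ≥ m^n·y^n. -/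
/-- If `p(u)·z·x ≥ m·z·y` with `u` power universal, then for every `n ≥ 1` there is
`k` with `u^{2k}·p(u)^n·x^n ≥ m^n·y^n`. -/
theorem stmt16 {S : Type*} [CommSemiring S] [Preorder S]
    (hadd : ∀ a b c : S, a ≤ b → a + c ≤ b + c)
    (hmul : ∀ a b c : S, a ≤ b → a * c ≤ b * c)
    (h10 : (0 : S) ≤ 1) (u : S) (hu : (1 : S) ≤ u)
    (hpow : ∀ s : S, s ≠ 0 → ∃ k : ℕ, 1 ≤ u ^ k * s ∧ s ≤ u ^ k)
    (p : Polynomial ℕ) (m : ℕ) (hm : 1 ≤ m) (z x y : S)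
    (hz : z ≠ 0) (hx : x ≠ 0) (hy : y ≠ 0)
    (h : (m : S) * z * y ≤ p.eval₂ (Nat.castRingHom S) u * z * x) :
    ∀ n : ℕ, 1 ≤ n → ∃ k : ℕ,
      (m : S) ^ n * y ^ n ≤ u ^ (2 * k) * (p.eval₂ (Nat.castRingHom S) u) ^ n * x ^ n := by
  set P : S := p.eval₂ (Nat.castRingHom S) u with hP
  have key : ∀ n : ℕ, 1 ≤ n → (m : S) ^ n * z * y ^ n ≤ P ^ n * z * x ^ n := by
    intro n hn
    induction n, hn using Nat.le_induction with
    | base => simpa using h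
    | succ n hn ih =>
      calc (m : S) ^ (n + 1) * z * y ^ (n + 1)
          = ((m : S) ^ n * z * y ^ n) * ((m : S) * y) := by ring
        _ ≤ (P ^ n * z * x ^ n) * ((m : S) * y) := hmul _ _ _ ih
        _ = ((m : S) * z * y) * (P ^ n * x ^ n) := by ring
        _ ≤ (P * z * x) * (P ^ n * x ^ n) := hmul _ _ _ h
        _ = P ^ (n + 1) * z * x ^ (n + 1) := by ring
  intro n hn
  obtain ⟨k, hk1, hk2⟩ := hpow z hz
  refine ⟨k, ?_⟩
  calc (m : S) ^ n * y ^ n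
      = 1 * ((m : S) ^ n * y ^ n) := by ring
    _ ≤ (u ^ k * z) * ((m : S) ^ n * y ^ n) := hmul _ _ _ hk1
    _ = ((m : S) ^ n * z * y ^ n) * u ^ k := by ring
    _ ≤ (P ^ n * z * x ^ n) * u ^ k := hmul _ _ _ (key n hn)
    _ = z * (P ^ n * x ^ n * u ^ k) := by ring
    _ ≤ u ^ k * (P ^ n * x ^ n * u ^ k) := hmul _ _ _ hk2
    _ = u ^ (2 * k) * P ^ n * x ^ n := by ring
end
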